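/- Let Y, G, U, X be random variables on a probability space, with U and X taking values in countable sets. Assume that Y and G are conditionally independent given the pair (X,U), i.e. for all (x,u) with P(X=x, U=u)>0 and all measurable sets A and B, P(Y∈A, G∈B | X=x, U=u) = P(Y∈A | X=x, U=u)·P(G∈B | X=x, U=u). Suppose that either G is conditionally independent of U given X, or Y is conditionally independent of U given X. Then for every g and x with P(G=g, X=x)>0 and every measurable set A, P(Y∈A | G=g, X=x) = P(Y∈A | X=x). -/

import Mathlib

open MeasureTheory

/-- Right-cancellation in `ℝ≥0∞` for a nonzero finite factor. -/
private lemma ennreal_cancel_right {p q m : ENNReal} (hm0 : m ≠ 0) (hmt : m ≠ ⊤)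
    (h : p * m = q * m) : p = q := by
  have h2 := congrArg (· * m⁻¹) h
  simpa [mul_assoc, ENNReal.mul_inv_cancel hm0 hmt] using h2

/-- From `a / m = (b / m) * (c / m)` with `m ≠ 0, ∞`, deduce `a * m = b * c`. -/
private lemma ennreal_div_prod {a b c m : ENNReal} (hm0 : m ≠ 0) (hmt : m ≠ ⊤)
    (h : a / m = b / m * (c / m)) : a * m = b * c := by
  have h1 : a / m * m = b / m * (c / m) * m := by rw [h]
  rw [ENNReal.div_mul_cancel hm0 hmt, mul_assoc, ENNReal.div_mul_cancel hm0 hmt] at h1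
  rw [h1, mul_comm (b / m) c, mul_assoc, ENNReal.div_mul_cancel hm0 hmt, mul_comm]

/-- Decompose the measure of a measurable set over the fibers of a countable-valued
measurable map. -/
private lemma meas_fiber_sum {Ω α : Type*} [MeasurableSpace Ω]
    [MeasurableSpace α] [Countable α] [MeasurableSingletonClass α]
    (P : Measure Ω) (U : Ω → α) (hU : Measurable U) (S : Set Ω) (hS : MeasurableSet S) :
    P S = ∑' u : α, P (S ∩ U ⁻¹' {u}) := by
  have hdecomp : S = ⋃ u : α, S ∩ U ⁻¹' {u} := by
    ext ω; simp
  have hdisj : Pairwise (Function.onFun Disjoint fun u : α => S ∩ U ⁻¹' {u}) := by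
    intro u v huv
    simp only [Function.onFun, Set.disjoint_left]
    rintro ω ⟨-, hu⟩ ⟨-, hv⟩
    rw [Set.mem_preimage, Set.mem_singleton_iff] at hu hv
    exact huv (hu ▸ hv ▸ rfl)
  have hms : ∀ u : α, MeasurableSet (S ∩ U ⁻¹' {u}) :=
    fun u => hS.inter (hU (measurableSet_singleton u))
  have := measure_iUnion (μ := P) hdisj hms
  rw [← hdecomp] at this
  exact this

/-- **Theorem 3 of the paper** (ignorability with completely measured covariates).
Let `Y`, `G`, `U`, `X` be random variables with `U` and `X` taking values in countable
sets.  Assume `Y` and `G` are conditionally independent given the pair `(X, U)`.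
If either `G ⫫ U | X` or `Y ⫫ U | X`, then for every `g`, `x` with `P(G=g, X=x) > 0`
and every measurable `A`, `P(Y∈A | G=g, X=x) = P(Y∈A | X=x)`. -/
theorem ignorability_unmeasured_confounding_with_covariates
    {Ω α β γ χ : Type*} [MeasurableSpace Ω]
    [MeasurableSpace α] [Countable α] [MeasurableSingletonClass α]
    [MeasurableSpace β]
    [MeasurableSpace γ] [MeasurableSingletonClass γ]
    [MeasurableSpace χ] [Countable χ] [MeasurableSingletonClass χ]
    (P : Measure Ω) [IsProbabilityMeasure P]
    (Y : Ω → β) (G : Ω → γ) (U : Ω → α) (X : Ω → χ)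
    (hY : Measurable Y) (hG : Measurable G) (hU : Measurable U) (hX : Measurable X)
    -- conditional independence of Y and G given (X, U)
    (hCI : ∀ (x : χ) (u : α), 0 < P (X ⁻¹' {x} ∩ U ⁻¹' {u}) →
      ∀ (A : Set β) (B : Set γ), MeasurableSet A → MeasurableSet B →
        P ((Y ⁻¹' A ∩ G ⁻¹' B) ∩ (X ⁻¹' {x} ∩ U ⁻¹' {u})) / P (X ⁻¹' {x} ∩ U ⁻¹' {u}) =
          (P (Y ⁻¹' A ∩ (X ⁻¹' {x} ∩ U ⁻¹' {u})) / P (X ⁻¹' {x} ∩ U ⁻¹' {u})) *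
            (P (G ⁻¹' B ∩ (X ⁻¹' {x} ∩ U ⁻¹' {u})) / P (X ⁻¹' {x} ∩ U ⁻¹' {u})))
    -- either G ⫫ U | X or Y ⫫ U | X
    (hInd :
      (∀ (x : χ), 0 < P (X ⁻¹' {x}) → ∀ (B : Set γ), MeasurableSet B → ∀ u : α,
          P ((G ⁻¹' B ∩ U ⁻¹' {u}) ∩ X ⁻¹' {x}) / P (X ⁻¹' {x}) =
            (P (G ⁻¹' B ∩ X ⁻¹' {x}) / P (X ⁻¹' {x})) *
              (P (U ⁻¹' {u} ∩ X ⁻¹' {x}) / P (X ⁻¹' {x}))) ∨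
      (∀ (x : χ), 0 < P (X ⁻¹' {x}) → ∀ (A : Set β), MeasurableSet A → ∀ u : α,
          P ((Y ⁻¹' A ∩ U ⁻¹' {u}) ∩ X ⁻¹' {x}) / P (X ⁻¹' {x}) =
            (P (Y ⁻¹' A ∩ X ⁻¹' {x}) / P (X ⁻¹' {x})) *
              (P (U ⁻¹' {u} ∩ X ⁻¹' {x}) / P (X ⁻¹' {x})))) :
    ∀ (g : γ) (x : χ), 0 < P (G ⁻¹' {g} ∩ X ⁻¹' {x}) →
      ∀ (A : Set β), MeasurableSet A →
        P (Y ⁻¹' A ∩ (G ⁻¹' {g} ∩ X ⁻¹' {x})) / P (G ⁻¹' {g} ∩ X ⁻¹' {x}) =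
          P (Y ⁻¹' A ∩ X ⁻¹' {x}) / P (X ⁻¹' {x}) := by
  intro g x hgx A hA
  set A' : Set Ω := Y ⁻¹' A with hA'
  set Gg : Set Ω := G ⁻¹' {g} with hGg
  set Xx : Set Ω := X ⁻¹' {x} with hXx
  have hA'm : MeasurableSet A' := hY hA
  have hGgm : MeasurableSet Gg := hG (measurableSet_singleton g)
  have hXxm : MeasurableSet Xx := hX (measurableSet_singleton x)
  have hx : 0 < P Xx := lt_of_lt_of_le hgx (measure_mono Set.inter_subset_right)
  have hxt : P Xx ≠ ⊤ := measure_ne_top P Xx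
  have hx0 : P Xx ≠ 0 := hx.ne'
  -- per-fiber consequence of hCI, valid for every u (trivially when the fiber is null)
  have hci : ∀ u : α,
      P ((A' ∩ (Gg ∩ Xx)) ∩ U ⁻¹' {u}) * P (Xx ∩ U ⁻¹' {u}) =
        P ((A' ∩ Xx) ∩ U ⁻¹' {u}) * P ((Gg ∩ Xx) ∩ U ⁻¹' {u}) := by
    intro u
    rcases eq_or_lt_of_le (zero_le : 0 ≤ P (Xx ∩ U ⁻¹' {u})) with hm | hm
    · have h1 : P ((A' ∩ (Gg ∩ Xx)) ∩ U ⁻¹' {u}) = 0 := by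
        refine measure_mono_null ?_ hm.symm
        rintro ω ⟨⟨-, -, hxω⟩, huω⟩; exact ⟨hxω, huω⟩
      have h2 : P ((Gg ∩ Xx) ∩ U ⁻¹' {u}) = 0 := by
        refine measure_mono_null ?_ hm.symm
        rintro ω ⟨⟨-, hxω⟩, huω⟩; exact ⟨hxω, huω⟩
      rw [h1, h2, zero_mul, mul_zero]
    · have h := ennreal_div_prod hm.ne' (measure_ne_top _ _)
        (hCI x u hm A {g} hA (measurableSet_singleton g))
      have e1 : (Y ⁻¹' A ∩ G ⁻¹' {g}) ∩ (X ⁻¹' {x} ∩ U ⁻¹' {u}) =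
          (A' ∩ (Gg ∩ Xx)) ∩ U ⁻¹' {u} := by
        ext ω
        exact ⟨fun ⟨⟨h1, h2⟩, h3, h4⟩ => ⟨⟨h1, h2, h3⟩, h4⟩,
          fun ⟨⟨h1, h2, h3⟩, h4⟩ => ⟨⟨h1, h2⟩, h3, h4⟩⟩
      have e2 : Y ⁻¹' A ∩ (X ⁻¹' {x} ∩ U ⁻¹' {u}) = (A' ∩ Xx) ∩ U ⁻¹' {u} :=
        (Set.inter_assoc _ _ _).symm
      have e3 : G ⁻¹' {g} ∩ (X ⁻¹' {x} ∩ U ⁻¹' {u}) = (Gg ∩ Xx) ∩ U ⁻¹' {u} :=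
        (Set.inter_assoc _ _ _).symm
      rw [e1, e2, e3] at h
      exact h
  -- the main product identity
  have key : P (A' ∩ (Gg ∩ Xx)) * P Xx = P (A' ∩ Xx) * P (Gg ∩ Xx) := by
    have hsum1 : P (A' ∩ (Gg ∩ Xx)) = ∑' u : α, P ((A' ∩ (Gg ∩ Xx)) ∩ U ⁻¹' {u}) :=
      meas_fiber_sum P U hU _ (hA'm.inter (hGgm.inter hXxm))
    have hsum2 : P (A' ∩ Xx) = ∑' u : α, P ((A' ∩ Xx) ∩ U ⁻¹' {u}) :=
      meas_fiber_sum P U hU _ (hA'm.inter hXxm)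
    have hsum3 : P (Gg ∩ Xx) = ∑' u : α, P ((Gg ∩ Xx) ∩ U ⁻¹' {u}) :=
      meas_fiber_sum P U hU _ (hGgm.inter hXxm)
    rcases hInd with hIndG | hIndY
    · -- case G ⫫ U | X
      -- per-fiber:  P((A'∩(Gg∩Xx))∩Uu) * P Xx = P((A'∩Xx)∩Uu) * P(Gg∩Xx)
      have perU : ∀ u : α,
          P ((A' ∩ (Gg ∩ Xx)) ∩ U ⁻¹' {u}) * P Xx =
            P ((A' ∩ Xx) ∩ U ⁻¹' {u}) * P (Gg ∩ Xx) := by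
        intro u
        rcases eq_or_lt_of_le (zero_le : 0 ≤ P (Xx ∩ U ⁻¹' {u})) with hm | hm
        · have h1 : P ((A' ∩ (Gg ∩ Xx)) ∩ U ⁻¹' {u}) = 0 := by
            refine measure_mono_null ?_ hm.symm
            rintro ω ⟨⟨-, -, hxω⟩, huω⟩; exact ⟨hxω, huω⟩
          have h2 : P ((A' ∩ Xx) ∩ U ⁻¹' {u}) = 0 := by
            refine measure_mono_null ?_ hm.symm
            rintro ω ⟨⟨-, hxω⟩, huω⟩; exact ⟨hxω, huω⟩
          rw [h1, h2, zero_mul, zero_mul]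
        · have hg := ennreal_div_prod hx0 hxt
            (hIndG x hx {g} (measurableSet_singleton g) u)
          have e4 : (G ⁻¹' {g} ∩ U ⁻¹' {u}) ∩ X ⁻¹' {x} = (Gg ∩ Xx) ∩ U ⁻¹' {u} := by
            ext ω
            exact ⟨fun ⟨⟨h1, h2⟩, h3⟩ => ⟨⟨h1, h3⟩, h2⟩,
              fun ⟨⟨h1, h3⟩, h2⟩ => ⟨⟨h1, h2⟩, h3⟩⟩
          have e5 : U ⁻¹' {u} ∩ X ⁻¹' {x} = Xx ∩ U ⁻¹' {u} := Set.inter_comm _ _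
          rw [e4, e5] at hg
          -- hg : P((Gg∩Xx)∩Uu) * P Xx = P(Gg∩Xx) * P(Xx∩Uu)
          refine ennreal_cancel_right hm.ne' (measure_ne_top P _) ?_
          calc P ((A' ∩ (Gg ∩ Xx)) ∩ U ⁻¹' {u}) * P Xx * P (Xx ∩ U ⁻¹' {u})
              = P ((A' ∩ (Gg ∩ Xx)) ∩ U ⁻¹' {u}) * P (Xx ∩ U ⁻¹' {u}) * P Xx := by ring
            _ = P ((A' ∩ Xx) ∩ U ⁻¹' {u}) * (P ((Gg ∩ Xx) ∩ U ⁻¹' {u}) * P Xx) := by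
                rw [hci u]; ring
            _ = P ((A' ∩ Xx) ∩ U ⁻¹' {u}) * (P (Gg ∩ Xx) * P (Xx ∩ U ⁻¹' {u})) := by
                rw [hg]
            _ = P ((A' ∩ Xx) ∩ U ⁻¹' {u}) * P (Gg ∩ Xx) * P (Xx ∩ U ⁻¹' {u}) := by ring
      calc P (A' ∩ (Gg ∩ Xx)) * P Xx
          = ∑' u : α, P ((A' ∩ (Gg ∩ Xx)) ∩ U ⁻¹' {u}) * P Xx := by
            rw [hsum1, ENNReal.tsum_mul_right]
        _ = ∑' u : α, P ((A' ∩ Xx) ∩ U ⁻¹' {u}) * P (Gg ∩ Xx) := tsum_congr perU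
        _ = P (A' ∩ Xx) * P (Gg ∩ Xx) := by rw [ENNReal.tsum_mul_right, ← hsum2]
    · -- case Y ⫫ U | X
      -- per-fiber:  P((A'∩(Gg∩Xx))∩Uu) * P Xx = P(A'∩Xx) * P((Gg∩Xx)∩Uu)
      have perU : ∀ u : α,
          P ((A' ∩ (Gg ∩ Xx)) ∩ U ⁻¹' {u}) * P Xx =
            P (A' ∩ Xx) * P ((Gg ∩ Xx) ∩ U ⁻¹' {u}) := by
        intro u
        rcases eq_or_lt_of_le (zero_le : 0 ≤ P (Xx ∩ U ⁻¹' {u})) with hm | hm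
        · have h1 : P ((A' ∩ (Gg ∩ Xx)) ∩ U ⁻¹' {u}) = 0 := by
            refine measure_mono_null ?_ hm.symm
            rintro ω ⟨⟨-, -, hxω⟩, huω⟩; exact ⟨hxω, huω⟩
          have h2 : P ((Gg ∩ Xx) ∩ U ⁻¹' {u}) = 0 := by
            refine measure_mono_null ?_ hm.symm
            rintro ω ⟨⟨-, hxω⟩, huω⟩; exact ⟨hxω, huω⟩
          rw [h1, h2, zero_mul, mul_zero]
        · have hy := ennreal_div_prod hx0 hxt (hIndY x hx A hA u)
          have e4 : (Y ⁻¹' A ∩ U ⁻¹' {u}) ∩ X ⁻¹' {x} = (A' ∩ Xx) ∩ U ⁻¹' {u} := by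
            ext ω
            exact ⟨fun ⟨⟨h1, h2⟩, h3⟩ => ⟨⟨h1, h3⟩, h2⟩,
              fun ⟨⟨h1, h3⟩, h2⟩ => ⟨⟨h1, h2⟩, h3⟩⟩
          have e5 : U ⁻¹' {u} ∩ X ⁻¹' {x} = Xx ∩ U ⁻¹' {u} := Set.inter_comm _ _
          rw [e4, e5] at hy
          -- hy : P((A'∩Xx)∩Uu) * P Xx = P(A'∩Xx) * P(Xx∩Uu)
          refine ennreal_cancel_right hm.ne' (measure_ne_top P _) ?_
          calc P ((A' ∩ (Gg ∩ Xx)) ∩ U ⁻¹' {u}) * P Xx * P (Xx ∩ U ⁻¹' {u})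
              = P ((A' ∩ (Gg ∩ Xx)) ∩ U ⁻¹' {u}) * P (Xx ∩ U ⁻¹' {u}) * P Xx := by ring
            _ = P ((A' ∩ Xx) ∩ U ⁻¹' {u}) * P Xx * P ((Gg ∩ Xx) ∩ U ⁻¹' {u}) := by
                rw [hci u]; ring
            _ = P (A' ∩ Xx) * P (Xx ∩ U ⁻¹' {u}) * P ((Gg ∩ Xx) ∩ U ⁻¹' {u}) := by
                rw [hy]
            _ = P (A' ∩ Xx) * P ((Gg ∩ Xx) ∩ U ⁻¹' {u}) * P (Xx ∩ U ⁻¹' {u}) := by ring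
      calc P (A' ∩ (Gg ∩ Xx)) * P Xx
          = ∑' u : α, P ((A' ∩ (Gg ∩ Xx)) ∩ U ⁻¹' {u}) * P Xx := by
            rw [hsum1, ENNReal.tsum_mul_right]
        _ = ∑' u : α, P (A' ∩ Xx) * P ((Gg ∩ Xx) ∩ U ⁻¹' {u}) := tsum_congr perU
        _ = P (A' ∩ Xx) * P (Gg ∩ Xx) := by rw [ENNReal.tsum_mul_left, ← hsum3]
  -- conclude
  rw [ENNReal.div_eq_div_iff hx0 hxt hgx.ne' (measure_ne_top P _)]
  rw [mul_comm (P Xx) _, mul_comm (P (Gg ∩ Xx)) _]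
  exact key
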